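/- arXiv:2111.06214 — 3 statements merged into one kernel-verified Lean document; each statement's English description precedes it below -/
import Mathlib

section
/- Let G be a graph, u and v vertices, k and t positive integers, and suppose |C(G − v)| ≥ ℓ·|C(G − v − u)| for some ℓ > 0. If c is uniformly random in C(G − v), then P(|L_c(u)| ≤ t) ≤ t/ℓ. -/
/-- The finset of proper `k`-colorings of a simple graph on a finite vertex type. -/
def properColorings {W : Type} [Fintype W] [DecidableEq W] (G : SimpleGraph W)
    [DecidableRel G.Adj] (k : ℕ) : Finset (W → Fin k) :=
  Finset.univ.filter fun c => ∀ u w, G.Adj u w → c u ≠ c w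

/-- The graph obtained from `G` by deleting the vertex `v`. -/
def deleteVertex {V : Type} (G : SimpleGraph V) (v : V) : SimpleGraph {u : V // u ≠ v} where
  Adj a b := G.Adj a b
  symm := ⟨fun _ _ h => G.adj_symm h⟩
  loopless := ⟨fun _ h => G.irrefl h⟩

instance {V : Type} (G : SimpleGraph V) [DecidableRel G.Adj] (v : V) :
    DecidableRel (deleteVertex G v).Adj :=
  fun a b => inferInstanceAs (Decidable (G.Adj a b))

/-- The graph obtained from `G` by deleting two vertices `v` and `u`. -/
def deleteTwo {V : Type} (G : SimpleGraph V) (v u : V) :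
    SimpleGraph {w : V // w ≠ v ∧ w ≠ u} where
  Adj a b := G.Adj a b
  symm := ⟨fun _ _ h => G.adj_symm h⟩
  loopless := ⟨fun _ h => G.irrefl h⟩

instance {V : Type} (G : SimpleGraph V) [DecidableRel G.Adj] (v u : V) :
    DecidableRel (deleteTwo G v u).Adj :=
  fun a b => inferInstanceAs (Decidable (G.Adj a b))

/-- Colors in `[k]` not used by `c` on the neighborhood of `u` inside `G - v`. -/
def availColors {V : Type} [Fintype V] [DecidableEq V] (G : SimpleGraph V)
    [DecidableRel G.Adj] (v u : V) {k : ℕ} (c : {w : V // w ≠ v} → Fin k) :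
    Finset (Fin k) :=
  Finset.univ.filter fun j => ∀ w : {w : V // w ≠ v}, G.Adj u w → c w ≠ j

/-!
Restricting a proper colouring of `G - v` to `G - v - u` maps the colourings in which `u` has at
most `t` available colours into `C(G - v - u)`. A fibre of this map consists of colourings that
differ only at `u`, and they all have the same available colours at `u`, among which the colour
of `u` must lie; so each fibre has at most `t` elements. Hence the number of such colourings is at
most `t |C(G - v - u)| ≤ (t / ℓ) |C(G - v)|`.
-/

open Finset

namespace ColoringRestriction

variable {V : Type} {G : SimpleGraph V} {v u : V} {k : ℕ}

def restrict (u : V) (c : {w : V // w ≠ v} → Fin k) : {w : V // w ≠ v ∧ w ≠ u} → Fin k :=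
  fun w => c ⟨w.1, w.2.1⟩

theorem eq_of_restrict_eq_of_apply_eq {c₁ c₂ : {w : V // w ≠ v} → Fin k} (hu : u ≠ v)
    (hres : restrict u c₁ = restrict u c₂) (hcu : c₁ ⟨u, hu⟩ = c₂ ⟨u, hu⟩) : c₁ = c₂ := by
  funext w
  by_cases hw : w.1 = u
  · obtain rfl : w = ⟨u, hu⟩ := Subtype.ext hw
    exact hcu
  · exact congrFun hres ⟨w.1, w.2, hw⟩

theorem restrict_injective_of_eq (huv : u = v) :
    Function.Injective (restrict u : ({w : V // w ≠ v} → Fin k) → _) := by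
  intro c₁ c₂ hres
  funext w
  exact congrFun hres ⟨w.1, w.2, huv ▸ w.2⟩

variable [Fintype V] [DecidableEq V] [DecidableRel G.Adj]

theorem restrict_mem_properColorings {c : {w : V // w ≠ v} → Fin k}
    (hc : c ∈ properColorings (deleteVertex G v) k) :
    restrict u c ∈ properColorings (deleteTwo G v u) k := by
  simp only [properColorings, mem_filter, mem_univ, true_and] at hc ⊢
  exact fun x y hxy => hc ⟨x.1, x.2.1⟩ ⟨y.1, y.2.1⟩ hxy

theorem availColors_eq_of_restrict_eq {c₁ c₂ : {w : V // w ≠ v} → Fin k}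
    (hres : restrict u c₁ = restrict u c₂) : availColors G v u c₁ = availColors G v u c₂ := by
  ext j
  simp only [availColors, mem_filter, mem_univ, true_and]
  refine forall_congr' fun w => imp_congr_right fun hw => ?_
  rw [show c₁ w = c₂ w from congrFun hres ⟨w.1, w.2, (G.ne_of_adj hw).symm⟩]

theorem apply_mem_availColors {c : {w : V // w ≠ v} → Fin k}
    (hc : c ∈ properColorings (deleteVertex G v) k) (hu : u ≠ v) :
    c ⟨u, hu⟩ ∈ availColors G v u c := by
  simp only [properColorings, mem_filter, mem_univ, true_and] at hc
  simp only [availColors, mem_filter, mem_univ, true_and]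
  exact fun w hw h => hc ⟨u, hu⟩ w hw h.symm

abbrev fewAvailable (G : SimpleGraph V) [DecidableRel G.Adj] (v u : V) (k t : ℕ) :
    Finset ({w : V // w ≠ v} → Fin k) :=
  (properColorings (deleteVertex G v) k).filter fun c => #(availColors G v u c) ≤ t

theorem card_fiber_fewAvailable_le {t : ℕ} (ht : 0 < t) (b : {w : V // w ≠ v ∧ w ≠ u} → Fin k) :
    #{c ∈ fewAvailable G v u k t | restrict u c = b} ≤ t := by
  set fiber := {c ∈ fewAvailable G v u k t | restrict u c = b}
  have mem_fiber {c} (hc : c ∈ fiber) :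
      (c ∈ properColorings (deleteVertex G v) k ∧ #(availColors G v u c) ≤ t) ∧
        restrict u c = b := by
    simpa only [fiber, fewAvailable, mem_filter] using hc
  by_cases huv : u = v
  · calc #fiber ≤ 1 := card_le_one.mpr fun c₁ h₁ c₂ h₂ =>
          restrict_injective_of_eq huv ((mem_fiber h₁).2.trans (mem_fiber h₂).2.symm)
      _ ≤ t := ht
  obtain hempty | ⟨c₀, hc₀⟩ := fiber.eq_empty_or_nonempty
  · simp [hempty]
  calc #fiber ≤ #(availColors G v u c₀) := by
        refine card_le_card_of_injOn (fun c => c ⟨u, huv⟩) (fun c hc => ?_) fun c₁ h₁ c₂ h₂ h => ?_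
        · rw [mem_coe,
            availColors_eq_of_restrict_eq ((mem_fiber hc₀).2.trans (mem_fiber hc).2.symm)]
          exact apply_mem_availColors (mem_fiber hc).1.1 huv
        · exact eq_of_restrict_eq_of_apply_eq huv
            ((mem_fiber h₁).2.trans (mem_fiber h₂).2.symm) h
    _ ≤ t := (mem_fiber hc₀).1.2

theorem card_fewAvailable_le {t : ℕ} (ht : 0 < t) :
    #(fewAvailable G v u k t) ≤ t * #(properColorings (deleteTwo G v u) k) :=
  card_le_mul_card_image_of_maps_to
    (fun _ hc => restrict_mem_properColorings (mem_filter.mp hc).1) t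
    fun b _ => card_fiber_fewAvailable_le ht b

end ColoringRestriction

open ColoringRestriction in
theorem prob_few_available_le_general {V : Type} [Fintype V] [DecidableEq V]
    (G : SimpleGraph V) [DecidableRel G.Adj] (v u : V) (k t : ℕ) (ht : 0 < t)
    (ℓ : ℝ) (hℓ : 0 < ℓ)
    (hind : ℓ * ((properColorings (deleteTwo G v u) k).card : ℝ) ≤
      ((properColorings (deleteVertex G v) k).card : ℝ)) :
    (((properColorings (deleteVertex G v) k).filter
        (fun c => (availColors G v u c).card ≤ t)).card : ℝ) /
      ((properColorings (deleteVertex G v) k).card : ℝ) ≤ t / ℓ := by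
  have hfew : (#(fewAvailable G v u k t) : ℝ) ≤ t * #(properColorings (deleteTwo G v u) k) := by
    exact_mod_cast card_fewAvailable_le ht
  obtain hzero | hpos := (Nat.cast_nonneg (α := ℝ) #(properColorings (deleteVertex G v) k)).eq_or_lt
  · rw [← hzero, div_zero]
    positivity
  rw [div_le_div_iff₀ hpos hℓ]
  calc (#(fewAvailable G v u k t) : ℝ) * ℓ
      ≤ t * #(properColorings (deleteTwo G v u) k) * ℓ := by gcongr
    _ = t * (ℓ * #(properColorings (deleteTwo G v u) k)) := by ring
    _ ≤ t * #(properColorings (deleteVertex G v) k) := by gcongr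

theorem prob_few_available_le {V : Type} [Fintype V] [DecidableEq V]
    (G : SimpleGraph V) [DecidableRel G.Adj] (v u : V) (k t : ℕ) (hk : 0 < k) (ht : 0 < t)
    (ℓ : ℝ) (hℓ : 0 < ℓ)
    (hind : ℓ * ((properColorings (deleteTwo G v u) k).card : ℝ) ≤
      ((properColorings (deleteVertex G v) k).card : ℝ)) :
    (((properColorings (deleteVertex G v) k).filter
        (fun c => (availColors G v u c).card ≤ t)).card : ℝ) /
      ((properColorings (deleteVertex G v) k).card : ℝ) ≤ t / ℓ :=
  prob_few_available_le_general G v u k t ht ℓ hℓ hind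
end

section
/- Let L₁, …, L_d be nonempty subsets of [k] and let X₁, …, X_d be independent with X_i uniform on L_i. For j ∈ [k], let A_j be the event that j ∉ {X₁, …, X_d}. Then for any j ≠ j', P(A_j ∩ A_{j'}) ≤ P(A_j)·P(A_{j'}); i.e., the events A_j are pairwise negatively correlated. -/
/-- The sample space of independent choices `x i ∈ L i`, as a finset of functions;
the uniform measure on it models `X i` independent and uniform on `L i`. -/
def sampleSpace {k d : ℕ} (L : Fin d → Finset (Fin k)) : Finset (Fin d → Fin k) :=
  Finset.univ.filter fun x => ∀ i, x i ∈ L i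

lemma sampleSpace_eq_piFinset {k d : ℕ} (L : Fin d → Finset (Fin k)) :
    sampleSpace L = Fintype.piFinset L := by
  ext x
  simp [sampleSpace, Fintype.mem_piFinset]

lemma filter_sampleSpace {k d : ℕ} (L : Fin d → Finset (Fin k))
    (P : Fin k → Prop) [DecidablePred P] :
    (sampleSpace L).filter (fun x => ∀ i, P (x i)) =
      Fintype.piFinset (fun i => (L i).filter P) := by
  ext x
  simp [sampleSpace, Fintype.mem_piFinset, Finset.mem_filter, forall_and]

lemma key_ineq {k : ℕ} (S : Finset (Fin k)) (j j' : Fin k) (h : j ≠ j') :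
    ((S.erase j).erase j').card * S.card ≤ (S.erase j).card * (S.erase j').card := by
  by_cases hj : j ∈ S
  · by_cases hj' : j' ∈ S
    · have h1 : (S.erase j).card = S.card - 1 := Finset.card_erase_of_mem hj
      have h2 : (S.erase j').card = S.card - 1 := Finset.card_erase_of_mem hj'
      have hj'e : j' ∈ S.erase j := Finset.mem_erase.mpr ⟨Ne.symm h, hj'⟩
      have h3 : ((S.erase j).erase j').card = S.card - 1 - 1 :=
        h1 ▸ Finset.card_erase_of_mem hj'e
      have hn : 2 ≤ S.card := Finset.one_lt_card.mpr ⟨j, hj, j', hj', h⟩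
      obtain ⟨m, hm⟩ : ∃ m, S.card = m + 2 := ⟨S.card - 2, by omega⟩
      have e1 : S.card - 1 = m + 1 := by omega
      have e2 : S.card - 1 - 1 = m := by omega
      rw [h1, h2, h3, e2, e1, hm]
      nlinarith
    · rw [Finset.erase_eq_of_notMem (fun hc => hj' (Finset.mem_of_mem_erase hc)),
        Finset.erase_eq_of_notMem hj']
  · rw [Finset.erase_eq_of_notMem hj, mul_comm]

/-- The events `A_j = {j ∉ {X₁,…,X_d}}` are pairwise negatively correlated. -/
theorem avoidance_negatively_correlated {k d : ℕ} (L : Fin d → Finset (Fin k))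
    (hL : ∀ i, (L i).Nonempty) (j j' : Fin k) (hjj' : j ≠ j') :
    (((sampleSpace L).filter fun x => (∀ i, x i ≠ j) ∧ ∀ i, x i ≠ j').card : ℝ) *
        ((sampleSpace L).card : ℝ) ≤
      (((sampleSpace L).filter fun x => ∀ i, x i ≠ j).card : ℝ) *
        (((sampleSpace L).filter fun x => ∀ i, x i ≠ j').card : ℝ) := by
  have e0 : ((sampleSpace L).filter fun x => (∀ i, x i ≠ j) ∧ ∀ i, x i ≠ j')
      = (sampleSpace L).filter fun x => ∀ i, x i ≠ j ∧ x i ≠ j' := by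
    apply Finset.filter_congr
    intro x _
    simp [forall_and]
  rw [e0, filter_sampleSpace L (fun a => a ≠ j ∧ a ≠ j'),
    filter_sampleSpace L (fun a => a ≠ j), filter_sampleSpace L (fun a => a ≠ j'),
    sampleSpace_eq_piFinset]
  have ej : ∀ i, (L i).filter (fun a => a ≠ j) = (L i).erase j := fun i =>
    Finset.filter_ne' _ _
  have ej' : ∀ i, (L i).filter (fun a => a ≠ j') = (L i).erase j' := fun i =>
    Finset.filter_ne' _ _
  have ejj' : ∀ i, (L i).filter (fun a => a ≠ j ∧ a ≠ j') = ((L i).erase j).erase j' := by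
    intro i
    ext a
    simp [Finset.mem_erase, and_comm, and_assoc]
    tauto
  simp only [Fintype.card_piFinset, ej, ej', ejj']
  push_cast
  rw [← Finset.prod_mul_distrib, ← Finset.prod_mul_distrib]
  apply Finset.prod_le_prod
  · intro i _; positivity
  · intro i _
    exact_mod_cast key_ineq (L i) j j' hjj'
end

section
/- Let k, d, t be positive integers with d ≤ Δ, and let L₁, …, L_d ⊆ [k] with |L_i| > t for all i ∈ I, where the indices outside I have their values X_i fixed, occupying a set B of at most d − |I| colors. Let X_i be independent uniform on L_i for i ∈ I, and Z = |{j ∈ [k] \ B : ∀i ∈ I, X_i ≠ j}|. Then E[Z] ≥ (k − |B|) · exp( (Σ_{i∈I} |L_i| · ln(1 − 1/|L_i|)) / (k − |B|) ). -/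
/-- Lower bound on the expected number of unblocked colors avoided by the independent
uniform choices `X i ∈ L i` (`i ∈ I`), via AM-GM and reordering of the double product:
`E[Z] ≥ (k - |B|) · exp( (∑_{i∈I} |L i| · ln(1 - 1/|L i|)) / (k - |B|) )`. -/
theorem expected_avoided_lower_bound {k d t Δ : ℕ} (I : Finset (Fin d))
    (L : Fin d → Finset (Fin k)) (B : Finset (Fin k)) (ht : 0 < t) (hd : d ≤ Δ)
    (hL : ∀ i ∈ I, t < (L i).card) (hB : B.card ≤ d - I.card) (hBk : B.card < k) :
    ((k : ℝ) - B.card) *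
        Real.exp ((∑ i ∈ I, ((L i).card : ℝ) * Real.log (1 - 1 / ((L i).card : ℝ))) /
          ((k : ℝ) - B.card)) ≤
      (∑ x ∈ Finset.univ.filter (fun x : Fin d → Fin k => ∀ i ∈ I, x i ∈ L i),
          (((Finset.univ \ B).filter fun j : Fin k => ∀ i ∈ I, x i ≠ j).card : ℝ)) /
        ((Finset.univ.filter (fun x : Fin d → Fin k => ∀ i ∈ I, x i ∈ L i)).card : ℝ) := by
  classical
  have hk : 0 < k := (Nat.zero_le _).trans_lt hBk
  set S := Finset.univ.filter (fun x : Fin d → Fin k => ∀ i ∈ I, x i ∈ L i) with hS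
  set T := (Finset.univ : Finset (Fin k)) \ B with hT
  have hL2 : ∀ i ∈ I, 2 ≤ (L i).card := fun i hi => Nat.lt_of_le_of_lt ht (hL i hi)
  have hcpos : ∀ i ∈ I, (0:ℝ) < ((L i).card : ℝ) := fun i hi => by
    exact_mod_cast lt_of_lt_of_le (by norm_num) (hL2 i hi)
  -- value of each factor
  have hfac : ∀ i ∈ I, ∀ j : Fin k,
      (((L i).erase j).card : ℝ) / ((L i).card : ℝ)
        = if j ∈ L i then 1 - 1 / ((L i).card : ℝ) else 1 := by
    intro i hi j
    by_cases hji : j ∈ L i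
    · rw [if_pos hji, Finset.card_erase_of_mem hji]
      have h1 : (1:ℕ) ≤ (L i).card := le_trans (by norm_num) (hL2 i hi)
      rw [Nat.cast_sub h1, Nat.cast_one]
      field_simp
    · rw [if_neg hji, Finset.erase_eq_of_notMem hji, div_self (ne_of_gt (hcpos i hi))]
  have hfacpos : ∀ i ∈ I, ∀ j : Fin k,
      (0:ℝ) < (((L i).erase j).card : ℝ) / ((L i).card : ℝ) := by
    intro i hi j
    rw [hfac i hi j]
    split_ifs with h
    · have h2 : (2:ℝ) ≤ ((L i).card : ℝ) := by exact_mod_cast hL2 i hi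
      have : 1 / ((L i).card : ℝ) < 1 := by
        rw [div_lt_one (hcpos i hi)]; linarith
      linarith
    · norm_num
  set c : Fin k → ℝ := fun j => ∏ i ∈ I, (((L i).erase j).card : ℝ) / ((L i).card : ℝ) with hc
  have hcjpos : ∀ j : Fin k, 0 < c j := fun j =>
    Finset.prod_pos fun i hi => hfacpos i hi j
  have hlogc : ∀ j : Fin k, Real.log (c j)
      = ∑ i ∈ I, if j ∈ L i then Real.log (1 - 1 / ((L i).card : ℝ)) else 0 := by
    intro j
    rw [hc]
    rw [Real.log_prod (fun i hi => (hfacpos i hi j).ne')]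
    refine Finset.sum_congr rfl fun i hi => ?_
    rw [hfac i hi j]
    split_ifs with h
    · rfl
    · exact Real.log_one
  -- sum of logs bound
  have hsumlog : (∑ i ∈ I, ((L i).card : ℝ) * Real.log (1 - 1 / ((L i).card : ℝ)))
      ≤ ∑ j ∈ T, Real.log (c j) := by
    rw [Finset.sum_congr rfl fun j _ => hlogc j, Finset.sum_comm]
    refine Finset.sum_le_sum fun i hi => ?_
    have h2 : (2:ℝ) ≤ ((L i).card : ℝ) := by exact_mod_cast hL2 i hi
    have hlog0 : Real.log (1 - 1 / ((L i).card : ℝ)) ≤ 0 := by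
      apply Real.log_nonpos
      · have : 1 / ((L i).card : ℝ) < 1 := by rw [div_lt_one (hcpos i hi)]; linarith
        linarith
      · have : 0 < 1 / ((L i).card : ℝ) := by positivity
        linarith
    rw [← Finset.sum_filter, Finset.sum_const, nsmul_eq_mul]
    have hsub : (T.filter fun j => j ∈ L i) ⊆ L i := fun x hx => (Finset.mem_filter.mp hx).2
    have hle : (((T.filter fun j => j ∈ L i).card : ℝ)) ≤ ((L i).card : ℝ) := by
      exact_mod_cast Finset.card_le_card hsub
    exact mul_le_mul_of_nonpos_right hle hlog0
  -- counting
  have hSeq : S = Fintype.piFinset (fun i => if i ∈ I then L i else Finset.univ) := by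
    ext x
    simp only [hS, Finset.mem_filter, Finset.mem_univ, true_and, Fintype.mem_piFinset]
    constructor
    · intro h i
      by_cases hi : i ∈ I
      · simpa [hi] using h i hi
      · simp [hi]
    · intro h i hi
      have := h i; rwa [if_pos hi] at this
  have hNcard : ∀ j : Fin k, (S.filter fun x => ∀ i ∈ I, x i ≠ j)
      = Fintype.piFinset (fun i => if i ∈ I then (L i).erase j else Finset.univ) := by
    intro j
    ext x
    simp only [hS, Finset.filter_filter, Finset.mem_filter, Finset.mem_univ, true_and,
      Fintype.mem_piFinset]
    constructor
    · rintro ⟨h1, h2⟩ i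
      by_cases hi : i ∈ I
      · simp [hi, Finset.mem_erase, h1 i hi, h2 i hi]
      · simp [hi]
    · intro h
      constructor
      · intro i hi; have := h i; rw [if_pos hi, Finset.mem_erase] at this; exact this.2
      · intro i hi; have := h i; rw [if_pos hi, Finset.mem_erase] at this; exact this.1
  have key : ∀ M : Fin d → Finset (Fin k),
      ((Fintype.piFinset (fun i => if i ∈ I then M i else (Finset.univ : Finset (Fin k)))).card : ℝ)
        = (∏ i ∈ I, ((M i).card : ℝ)) * (k : ℝ) ^ ((Finset.univ \ I : Finset (Fin d)).card) := by
    intro M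
    rw [Fintype.card_piFinset]
    push_cast
    rw [← Finset.prod_sdiff (Finset.subset_univ I)]
    have h1 : (∏ i ∈ I, (((if i ∈ I then M i else Finset.univ).card : ℕ) : ℝ))
        = ∏ i ∈ I, ((M i).card : ℝ) :=
      Finset.prod_congr rfl fun i hi => by rw [if_pos hi]
    have h2 : (∏ i ∈ (Finset.univ \ I : Finset (Fin d)),
        (((if i ∈ I then M i else Finset.univ).card : ℕ) : ℝ))
        = (k : ℝ) ^ ((Finset.univ \ I : Finset (Fin d)).card) := by
      rw [Finset.prod_congr rfl fun i hi => ?_, Finset.prod_const]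
      rw [if_neg (Finset.mem_sdiff.mp hi).2, Finset.card_univ, Fintype.card_fin]
    rw [h1, h2, mul_comm]
  have hkpow : ((k:ℝ) ^ ((Finset.univ \ I : Finset (Fin d)).card)) ≠ 0 := by positivity
  have hSpos : (0:ℝ) < (S.card : ℝ) := by
    rw [hSeq, key]
    apply mul_pos
    · exact Finset.prod_pos hcpos
    · positivity
  have hratio : ∀ j : Fin k,
      ((S.filter fun x => ∀ i ∈ I, x i ≠ j).card : ℝ) / (S.card : ℝ) = c j := by
    intro j
    rw [hNcard j, hSeq, key, key, mul_div_mul_right _ _ hkpow]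
    exact (Finset.prod_div_distrib _ _).symm
  -- swap double sum
  have hswap : (∑ x ∈ S, ((T.filter fun j : Fin k => ∀ i ∈ I, x i ≠ j).card : ℝ))
      = ∑ j ∈ T, ((S.filter fun x => ∀ i ∈ I, x i ≠ j).card : ℝ) := by
    have h : (∑ x ∈ S, (T.filter fun j : Fin k => ∀ i ∈ I, x i ≠ j).card)
        = ∑ j ∈ T, (S.filter fun x => ∀ i ∈ I, x i ≠ j).card := by
      simp_rw [Finset.card_filter]
      exact Finset.sum_comm
    exact_mod_cast h
  have hrhs : (∑ x ∈ S, ((T.filter fun j : Fin k => ∀ i ∈ I, x i ≠ j).card : ℝ)) / (S.card : ℝ)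
      = ∑ j ∈ T, c j := by
    rw [hswap, Finset.sum_div]
    exact Finset.sum_congr rfl fun j _ => hratio j
  rw [hrhs]
  -- cardinality of T
  have hTcard : ((T.card : ℝ)) = (k : ℝ) - B.card := by
    rw [hT, Finset.card_sdiff_of_subset (Finset.subset_univ _), Finset.card_univ, Fintype.card_fin]
    exact_mod_cast Nat.cast_sub hBk.le
  have hnpos : (0:ℝ) < (k : ℝ) - B.card := by
    have : (B.card : ℝ) < (k : ℝ) := by exact_mod_cast hBk
    linarith
  have hTpos : (0:ℝ) < (T.card : ℝ) := by rw [hTcard]; exact hnpos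
  -- AM-GM
  have hw : (∑ _j ∈ T, ((T.card : ℝ))⁻¹) = 1 := by
    rw [Finset.sum_const, nsmul_eq_mul, mul_inv_cancel₀ hTpos.ne']
  have hamgm := Real.geom_mean_le_arith_mean_weighted T (fun _ => ((T.card : ℝ))⁻¹) c
    (fun _ _ => by positivity) hw (fun j _ => (hcjpos j).le)
  have hexp : Real.exp ((∑ j ∈ T, Real.log (c j)) / (T.card : ℝ))
      = ∏ j ∈ T, c j ^ ((T.card : ℝ))⁻¹ := by
    rw [Finset.sum_div, Real.exp_sum]
    refine Finset.prod_congr rfl fun j _ => ?_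
    rw [Real.rpow_def_of_pos (hcjpos j), div_eq_mul_inv]
  calc ((k : ℝ) - B.card) *
        Real.exp ((∑ i ∈ I, ((L i).card : ℝ) * Real.log (1 - 1 / ((L i).card : ℝ))) /
          ((k : ℝ) - B.card))
      ≤ ((k : ℝ) - B.card) * Real.exp ((∑ j ∈ T, Real.log (c j)) / ((k : ℝ) - B.card)) := by
        gcongr
    _ = (T.card : ℝ) * ∏ j ∈ T, c j ^ ((T.card : ℝ))⁻¹ := by
        rw [← hTcard, hexp]
    _ ≤ (T.card : ℝ) * ∑ j ∈ T, ((T.card : ℝ))⁻¹ * c j := by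
        exact mul_le_mul_of_nonneg_left hamgm hTpos.le
    _ = ∑ j ∈ T, c j := by
        rw [← Finset.mul_sum, ← mul_assoc, mul_inv_cancel₀ hTpos.ne', one_mul]
end
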